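/- arXiv:math/0307166 — 2 statements merged into one kernel-verified Lean document; each statement's English description precedes it below -/
import Mathlib

section
/- Under the bipartite reflection setup, suppose u : V → ℝ satisfies u(g) > 0 and 2·u(g) = Σ_{h ∈ M_g} u(h) for every vertex g, and define L(x) = Σ_{g ∈ V•} u(g)·x(g) − Σ_{g ∈ V∘} u(g)·x(g). If x : V → ℝ satisfies x(g) ≥ 0 for all g and L(x) ≠ 0, then there exist an integer t and a vertex g with (c_t x)(g) < 0 (i.e. the vector x is singular: some iterate c_t(x) fails to be nonnegative). -/
/-- The simultaneous reflection applied at all vertices `g` with `p g = b`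
(the product of the commuting reflections `σ_g` over that class of a bipartition). -/
def creflect {V : Type*} [Fintype V] [DecidableEq V] (G : SimpleGraph V)
    [DecidableRel G.Adj] (p : V → Bool) (b : Bool) (x : V → ℝ) : V → ℝ :=
  fun g => if p g = b then -x g + ∑ h ∈ G.neighborFinset g, x h else x g

/-- The alternating composition of `n` factors, the rightmost factor being the
reflection of class `start`; the leftmost factor alternates. -/
def czNat {V : Type*} [Fintype V] [DecidableEq V] (G : SimpleGraph V)
    [DecidableRel G.Adj] (p : V → Bool) (start : Bool) : ℕ → (V → ℝ) → (V → ℝ)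
  | 0 => id
  | n + 1 => creflect G p (if n % 2 = 0 then start else !start) ∘ czNat G p start n

/-- `cz G p t` is the Coxeter-type transformation `c_t`, `t ∈ ℤ`: `c₀ = id`;
for `t > 0` the alternating composition of `t` factors ending (on the right) with
`c• = creflect G p false`; for `t < 0` ending with `c∘ = creflect G p true`.
(Here `p g = true` means `g` is even, `p g = false` means `g` is odd.) -/
def cz {V : Type*} [Fintype V] [DecidableEq V] (G : SimpleGraph V)
    [DecidableRel G.Adj] (p : V → Bool) (t : ℤ) : (V → ℝ) → (V → ℝ) :=
  if 0 ≤ t then czNat G p false t.toNat else czNat G p true (-t).toNat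


section Aux

variable {V : Type*} [Fintype V] [DecidableEq V] (G : SimpleGraph V)
    [DecidableRel G.Adj] (p : V → Bool) (u : V → ℝ)

noncomputable def Aform (b : Bool) (x : V → ℝ) : ℝ :=
  ∑ g ∈ Finset.univ.filter (fun g => p g = b), u g * x g

lemma sum_nbr_comm (f : V → V → ℝ) :
    ∑ g, ∑ h ∈ G.neighborFinset g, f g h = ∑ h, ∑ g ∈ G.neighborFinset h, f g h := by
  simp only [SimpleGraph.neighborFinset_eq_filter, Finset.sum_filter]
  rw [Finset.sum_comm]
  apply Finset.sum_congr rfl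
  intro h _
  apply Finset.sum_congr rfl
  intro g _
  have hadj : G.Adj g h ↔ G.Adj h g := G.adj_comm g h
  simp only [hadj]

lemma neighbor_sum (hbip : ∀ a b : V, G.Adj a b → p a ≠ p b)
    (hharm : ∀ g, 2 * u g = ∑ h ∈ G.neighborFinset g, u h) (b : Bool) (x : V → ℝ) :
    ∑ g ∈ Finset.univ.filter (fun g => p g = b), u g * ∑ h ∈ G.neighborFinset g, x h
      = 2 * ∑ h ∈ Finset.univ.filter (fun h => p h = !b), u h * x h := by
  rw [Finset.sum_filter]
  have key : ∀ g, (if p g = b then u g * ∑ h ∈ G.neighborFinset g, x h else 0)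
      = ∑ h ∈ G.neighborFinset g, (if p g = b then u g * x h else 0) := by
    intro g; split <;> simp [Finset.mul_sum]
  simp_rw [key]
  rw [sum_nbr_comm]
  rw [Finset.mul_sum, Finset.sum_filter]
  apply Finset.sum_congr rfl
  intro h _
  by_cases hh : p h = !b
  · have hb : ∀ g ∈ G.neighborFinset h, p g = b := by
      intro g hg
      rw [SimpleGraph.mem_neighborFinset] at hg
      have := hbip h g hg
      rw [hh] at this
      cases b <;> cases hpg : p g <;> simp_all
    rw [if_pos hh]
    rw [Finset.sum_congr rfl (fun g hg => by rw [if_pos (hb g hg)])]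
    rw [← Finset.sum_mul, ← hharm h]
    ring
  · have hb : ∀ g ∈ G.neighborFinset h, ¬ (p g = b) := by
      intro g hg
      rw [SimpleGraph.mem_neighborFinset] at hg
      have := hbip h g hg
      cases b <;> cases hpg : p g <;> simp_all
    rw [if_neg hh]
    rw [Finset.sum_congr rfl (fun g hg => by rw [if_neg (hb g hg)])]
    simp

lemma reflect_A_same (hbip : ∀ a b : V, G.Adj a b → p a ≠ p b)
    (hharm : ∀ g, 2 * u g = ∑ h ∈ G.neighborFinset g, u h) (b : Bool) (x : V → ℝ) :
    Aform p u b (creflect G p b x) = -Aform p u b x + 2 * Aform p u (!b) x := by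
  unfold Aform
  have key : ∀ g ∈ Finset.univ.filter (fun g => p g = b),
      u g * creflect G p b x g = -(u g * x g) + u g * ∑ h ∈ G.neighborFinset g, x h := by
    intro g hg
    rw [Finset.mem_filter] at hg
    simp only [creflect, if_pos hg.2]
    ring
  rw [Finset.sum_congr rfl key, Finset.sum_add_distrib, Finset.sum_neg_distrib,
    neighbor_sum G p u hbip hharm b x]

lemma reflect_A_other (b : Bool) (x : V → ℝ) :
    Aform p u (!b) (creflect G p b x) = Aform p u (!b) x := by
  unfold Aform
  apply Finset.sum_congr rfl
  intro g hg
  rw [Finset.mem_filter] at hg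
  have : p g ≠ b := by cases b <;> simp_all
  simp [creflect, this]

noncomputable def Lform (x : V → ℝ) : ℝ := Aform p u false x - Aform p u true x

noncomputable def Sform (x : V → ℝ) : ℝ := Aform p u false x + Aform p u true x

lemma L_reflect (hbip : ∀ a b : V, G.Adj a b → p a ≠ p b)
    (hharm : ∀ g, 2 * u g = ∑ h ∈ G.neighborFinset g, u h) (b : Bool) (x : V → ℝ) :
    Lform p u (creflect G p b x) = -Lform p u x := by
  unfold Lform
  cases b
  · have h1 := reflect_A_same G p u hbip hharm false x
    have h2 := reflect_A_other G p u false x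
    simp only [Bool.not_false] at h1 h2
    rw [h1, h2]; ring
  · have h1 := reflect_A_same G p u hbip hharm true x
    have h2 := reflect_A_other G p u true x
    simp only [Bool.not_true] at h1 h2
    rw [h1, h2]; ring

lemma S_reflect (hbip : ∀ a b : V, G.Adj a b → p a ≠ p b)
    (hharm : ∀ g, 2 * u g = ∑ h ∈ G.neighborFinset g, u h) (b : Bool) (x : V → ℝ) :
    Sform p u (creflect G p b x) = Sform p u x + (if b then 2 else -2) * Lform p u x := by
  unfold Sform Lform
  cases b
  · have h1 := reflect_A_same G p u hbip hharm false x
    have h2 := reflect_A_other G p u false x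
    simp only [Bool.not_false] at h1 h2
    rw [h1, h2]; simp; ring
  · have h1 := reflect_A_same G p u hbip hharm true x
    have h2 := reflect_A_other G p u true x
    simp only [Bool.not_true] at h1 h2
    rw [h1, h2]; simp; ring

lemma czNat_LS (hbip : ∀ a b : V, G.Adj a b → p a ≠ p b)
    (hharm : ∀ g, 2 * u g = ∑ h ∈ G.neighborFinset g, u h) (start : Bool) (x : V → ℝ) :
    ∀ n : ℕ, Lform p u (czNat G p start n x) = (-1 : ℝ)^n * Lform p u x ∧
      Sform p u (czNat G p start n x) = Sform p u x
        + (if start then 2 else -2) * n * Lform p u x := by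
  intro n
  induction n with
  | zero => simp [czNat]
  | succ n ih =>
    obtain ⟨ihL, ihS⟩ := ih
    have hc : czNat G p start (n + 1) x
        = creflect G p (if n % 2 = 0 then start else !start) (czNat G p start n x) := rfl
    constructor
    · rw [hc, L_reflect G p u hbip hharm, ihL]
      rw [pow_succ]; ring
    · rw [hc, S_reflect G p u hbip hharm, ihS, ihL]
      rcases Nat.even_or_odd n with he | ho
      · have h0 : n % 2 = 0 := Nat.even_iff.mp he
        rw [if_pos h0, he.neg_one_pow]
        push_cast
        cases start <;> simp <;> ring
      · have h0 : ¬ (n % 2 = 0) := by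
          rw [Nat.odd_iff] at ho; omega
        rw [if_neg h0, ho.neg_one_pow]
        push_cast
        cases start <;> simp <;> ring

end Aux


/-- Under the bipartite reflection setup, if `u > 0` satisfies
`2·u(g) = Σ_{h ∈ M_g} u(h)` for every `g`, `L(x) = Σ_{g odd} u(g)x(g) − Σ_{g even} u(g)x(g)`,
and `x ≥ 0` has `L(x) ≠ 0`, then some iterate `c_t(x)` has a negative coordinate
(i.e. `x` is singular). -/
theorem nonvanishing_form_implies_singular {V : Type*} [Fintype V] [DecidableEq V]
    (G : SimpleGraph V) [DecidableRel G.Adj] (p : V → Bool)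
    (hbip : ∀ a b : V, G.Adj a b → p a ≠ p b)
    (u : V → ℝ) (hpos : ∀ g, 0 < u g)
    (hharm : ∀ g, 2 * u g = ∑ h ∈ G.neighborFinset g, u h)
    (x : V → ℝ) (hx : ∀ g, 0 ≤ x g)
    (hL : (∑ g ∈ Finset.univ.filter (fun g => p g = false), u g * x g) -
          (∑ g ∈ Finset.univ.filter (fun g => p g = true), u g * x g) ≠ 0) :
    ∃ (t : ℤ) (g : V), cz G p t x g < 0 := by
  by_contra hcon
  push_neg at hcon
  have hLx : Lform p u x ≠ 0 := hL
  have hSnn : ∀ t : ℤ, 0 ≤ Sform p u (cz G p t x) := by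
    intro t
    have h1 : ∀ (b : Bool),
        0 ≤ ∑ g ∈ Finset.univ.filter (fun g => p g = b), u g * cz G p t x g :=
      fun b => Finset.sum_nonneg fun g _ => mul_nonneg (hpos g).le (hcon t g)
    have := h1 false
    have := h1 true
    unfold Sform Aform
    linarith
  set L := Lform p u x with hLdef
  set S := Sform p u x with hSdef
  have habs : 0 < 2 * |L| := by
    have := abs_pos.mpr hLx
    linarith
  obtain ⟨n, hn⟩ := exists_nat_gt (S / (2 * |L|))
  set m : ℕ := n + 1 with hm
  have hSn : S < 2 * (m : ℝ) * |L| := by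
    have h2 := (div_lt_iff₀ habs).mp hn
    have hnm : (n : ℝ) ≤ (m : ℝ) := by push_cast [hm]; linarith
    nlinarith
  rcases lt_or_gt_of_ne hLx with hneg | hposL
  · -- L < 0 : use t = -m
    have ht : ¬ (0 ≤ -((m : ℤ))) := by omega
    have hcz : cz G p (-(m : ℤ)) x = czNat G p true m x := by
      unfold cz
      rw [if_neg ht]
      simp
    have hS := (czNat_LS G p u hbip hharm true x m).2
    rw [if_pos rfl] at hS
    have h0 := hSnn (-(m : ℤ))
    rw [hcz, hS] at h0
    have hab : |L| = -L := abs_of_neg hneg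
    rw [hab] at hSn
    rw [← hLdef, ← hSdef] at h0
    nlinarith
  · -- L > 0 : use t = m
    have ht : (0 : ℤ) ≤ (m : ℤ) := by omega
    have hcz : cz G p ((m : ℤ)) x = czNat G p false m x := by
      unfold cz
      rw [if_pos ht]
      simp
    have hS := (czNat_LS G p u hbip hharm false x m).2
    rw [if_neg (by simp)] at hS
    have h0 := hSnn ((m : ℤ))
    rw [hcz, hS] at h0
    have hab : |L| = L := abs_of_pos hposL
    rw [hab] at hSn
    rw [← hLdef, ← hSdef] at h0
    nlinarith
end

section
/- The set of minimal elements (with respect to the partial order on Ṽ) of {v ∈ Ṽ : ρ(v) > 4} is exactly K̂ = {(1,1,1,1,1), (2,1,1,1), (3,2,2), (4,3,1), (6,2,1)}. -/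
/-! `ρ(n) = 2 - 2/(n+1)` is increasing and concave, with increments `ρ(n) - ρ(n-1) = 2/(n(n+1))`.
Each element of `K̂` has `ρ > 4`, while lowering its largest entry by one brings `ρ` down to
exactly `4`; by concavity, lowering any entry costs at least as much, so the elements of `K̂` are
minimal. Conversely, a case analysis on the first four entries shows that every `v ∈ Ṽ` with
`ρ(v) > 4` dominates an element of `K̂`, so a minimal `v` is one of them. -/

/-- `ρ(n) = 1 + (n−1)/(n+1)`; note that this gives `ρ(0) = 0`. -/
noncomputable def rho (n : ℕ) : ℝ := 1 + ((n : ℝ) - 1) / ((n : ℝ) + 1)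

/-- The element of `Ṽ` whose entries are those of the list `l` (then zeros). -/
def ofList (l : List ℕ) : ℕ → ℕ := fun i => l.getD i 0

/-- Membership in `Ṽ`: a nonincreasing, finitely supported sequence
of nonnegative integers. -/
def IsVt (v : ℕ → ℕ) : Prop :=
  (∀ i j, i ≤ j → v j ≤ v i) ∧ ∃ s, ∀ i, s ≤ i → v i = 0

/-- `ρ(v) = Σ_i ρ(v_i)`, a finite sum since `ρ(0) = 0` and `v` is finitely
supported. -/
noncomputable def rhoV (v : ℕ → ℕ) : ℝ := ∑ᶠ i, rho (v i)

lemma rho_eq_two_sub (n : ℕ) : rho n = 2 - 2 / ((n : ℝ) + 1) := by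
  unfold rho
  field_simp
  ring

lemma rho_zero : rho 0 = 0 := by norm_num [rho]

lemma rho_lt_two (n : ℕ) : rho n < 2 := by
  rw [rho_eq_two_sub]
  have : (0 : ℝ) < 2 / ((n : ℝ) + 1) := by positivity
  linarith

lemma rho_mono : Monotone rho := fun m n hmn => by
  rw [rho_eq_two_sub, rho_eq_two_sub]
  gcongr

lemma rho_sub_rho_pred {n : ℕ} (hn : 1 ≤ n) :
    rho n - rho (n - 1) = 2 / ((n : ℝ) * (n + 1)) := by
  obtain ⟨m, rfl⟩ := Nat.exists_eq_add_of_le' hn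
  rw [Nat.add_sub_cancel, rho_eq_two_sub, rho_eq_two_sub]
  push_cast
  field_simp
  ring

lemma rho_sub_rho_pred_antitone {m n : ℕ} (hm : 1 ≤ m) (hmn : m ≤ n) :
    rho n - rho (n - 1) ≤ rho m - rho (m - 1) := by
  rw [rho_sub_rho_pred hm, rho_sub_rho_pred (hm.trans hmn)]
  have : (1 : ℝ) ≤ m := by exact_mod_cast hm
  gcongr

lemma IsVt.eq_zero_of_le {v : ℕ → ℕ} (hv : IsVt v) {n i : ℕ} (hn : v n = 0) (hi : n ≤ i) :
    v i = 0 :=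
  Nat.eq_zero_of_le_zero (hn ▸ hv.1 n i hi)

lemma rhoV_eq_sum_range {v : ℕ → ℕ} {s : ℕ} (hs : ∀ i, s ≤ i → v i = 0) :
    rhoV v = ∑ i ∈ Finset.range s, rho (v i) := by
  refine finsum_eq_finsetSum_of_support_subset _ fun i hi => ?_
  by_contra his
  simp only [Finset.coe_range, Set.mem_Iio, not_lt] at his
  exact hi (by simp only [hs i his, rho_zero])

lemma rhoV_le_of_le_of_ne {v w : ℕ → ℕ} (hw : IsVt w) (hle : ∀ i, v i ≤ w i)
    (hne : v ≠ w) :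
    rhoV v ≤ rhoV w - (rho (w 0) - rho (w 0 - 1)) := by
  obtain ⟨s, hs⟩ := hw.2
  obtain ⟨i, hi⟩ := Function.ne_iff.mp hne
  have hlt : v i < w i := (hle i).lt_of_ne hi
  have his : i < s := by
    by_contra! h
    rw [hs i h] at hlt
    exact Nat.not_lt_zero _ hlt
  have hdrop : rho (w 0) - rho (w 0 - 1) ≤ rho (w i) - rho (v i) :=
    calc rho (w 0) - rho (w 0 - 1) ≤ rho (w i) - rho (w i - 1) :=
          rho_sub_rho_pred_antitone (by omega) (hw.1 0 i i.zero_le)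
      _ ≤ rho (w i) - rho (v i) := by gcongr; exact rho_mono (by omega)
  have hsum : rho (w i) - rho (v i) ≤ ∑ j ∈ Finset.range s, (rho (w j) - rho (v j)) :=
    Finset.single_le_sum (fun j _ => sub_nonneg.mpr (rho_mono (hle j)))
      (Finset.mem_range.mpr his)
  rw [rhoV_eq_sum_range hs,
    rhoV_eq_sum_range fun j hj => Nat.eq_zero_of_le_zero (hs j hj ▸ hle j)]
  rw [Finset.sum_sub_distrib] at hsum
  linarith

lemma rhoV_ofList (l : List ℕ) : rhoV (ofList l) = (l.map rho).sum := by
  rw [rhoV_eq_sum_range (v := ofList l) (s := l.length) fun i hi => List.getD_eq_default _ _ hi]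
  induction l with
  | nil => simp
  | cons a l ih =>
    simp only [List.length_cons, Finset.sum_range_succ', List.map_cons, List.sum_cons, ofList,
      List.getD_cons_succ, List.getD_cons_zero] at ih ⊢
    rw [ih, add_comm]

lemma isVt_ofList {l : List ℕ} (hl : l.Pairwise (· ≥ ·)) : IsVt (ofList l) := by
  refine ⟨fun i j hij => ?_, l.length, fun i hi => List.getD_eq_default _ _ hi⟩
  by_cases hj : j < l.length
  · have hi : i < l.length := hij.trans_lt hj
    simp only [ofList, List.getD_eq_getElem _ _ hj, List.getD_eq_getElem _ _ hi]
    rcases hij.eq_or_lt with rfl | hlt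
    · exact le_rfl
    · exact List.pairwise_iff_getElem.mp hl i j hi hj hlt
  · simp only [ofList, List.getD_eq_default _ _ (not_lt.mp hj), zero_le]

lemma ofList_nil (i : ℕ) : ofList [] i = 0 := rfl

lemma ofList_cons_le_iff (a : ℕ) (l : List ℕ) (v : ℕ → ℕ) :
    (∀ i, ofList (a :: l) i ≤ v i) ↔ a ≤ v 0 ∧ ∀ i, ofList l i ≤ v (i + 1) :=
  ⟨fun h => ⟨h 0, fun i => h (i + 1)⟩, fun ⟨h0, h⟩ i => by cases i with
    | zero => exact h0
    | succ i => exact h i⟩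

/-- The set `K̂`, as a list of the nonzero entries of its elements. -/
def kHat : List (List ℕ) := [[1, 1, 1, 1, 1], [2, 1, 1, 1], [3, 2, 2], [4, 3, 1], [6, 2, 1]]

lemma exists_mem_kHat_eq_ofList_iff (w : ℕ → ℕ) :
    (∃ k ∈ kHat, w = ofList k) ↔
      w = ofList [1, 1, 1, 1, 1] ∨ w = ofList [2, 1, 1, 1] ∨
      w = ofList [3, 2, 2] ∨ w = ofList [4, 3, 1] ∨ w = ofList [6, 2, 1] := by
  simp [kHat]

lemma isVt_of_mem_kHat {k : List ℕ} (hk : k ∈ kHat) : IsVt (ofList k) :=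
  isVt_ofList (by revert k; decide)

lemma four_lt_rhoV_of_mem_kHat {k : List ℕ} (hk : k ∈ kHat) : 4 < rhoV (ofList k) := by
  simp only [kHat, List.mem_cons, List.not_mem_nil, or_false] at hk
  rcases hk with rfl | rfl | rfl | rfl | rfl <;> norm_num [rhoV_ofList, rho]

lemma rhoV_sub_rho_sub_rho_pred_of_mem_kHat {k : List ℕ} (hk : k ∈ kHat) :
    rhoV (ofList k) - (rho (ofList k 0) - rho (ofList k 0 - 1)) = 4 := by
  simp only [kHat, List.mem_cons, List.not_mem_nil, or_false] at hk
  rcases hk with rfl | rfl | rfl | rfl | rfl <;> norm_num [rhoV_ofList, ofList, rho]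

lemma eq_ofList_of_le_of_four_lt_rhoV {k : List ℕ} (hk : k ∈ kHat) {v : ℕ → ℕ}
    (hle : ∀ i, v i ≤ ofList k i) (hv : 4 < rhoV v) : v = ofList k := by
  by_contra hne
  have := rhoV_le_of_le_of_ne (isVt_of_mem_kHat hk) hle hne
  linarith [rhoV_sub_rho_sub_rho_pred_of_mem_kHat hk]

lemma le_of_four_lt_rho_add {a b c d : ℕ} (hba : b ≤ a) (hcb : c ≤ b) (hdc : d ≤ c)
    (h : 4 < rho a + rho b + rho c + rho d) :
    (2 ≤ a ∧ 1 ≤ d) ∨ (3 ≤ a ∧ 2 ≤ c) ∨ (4 ≤ a ∧ 3 ≤ b ∧ 1 ≤ c) ∨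
      (6 ≤ a ∧ 2 ≤ b ∧ 1 ≤ c) := by
  have ρ1 : rho 1 = 1 := by norm_num [rho]
  have ρ2 : rho 2 = 4 / 3 := by norm_num [rho]
  have ρ3 : rho 3 = 3 / 2 := by norm_num [rho]
  have ρ5 : rho 5 = 5 / 3 := by norm_num [rho]
  have := rho_lt_two a
  have := rho_lt_two b
  obtain hd | hd := Nat.lt_or_ge d 1
  · rw [Nat.lt_one_iff.mp hd, rho_zero] at h
    obtain hc | hc := Nat.lt_or_ge c 2
    · have hc1 : c = 1 := by
        by_contra hc1
        rw [show c = 0 by omega, rho_zero] at h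
        linarith
      rw [hc1, ρ1] at h
      obtain hb | hb | hb := show b ≤ 1 ∨ b = 2 ∨ 3 ≤ b by omega
      · linarith [rho_mono hb]
      · rw [hb, ρ2] at h
        have : 6 ≤ a := by
          by_contra! ha
          linarith [rho_mono (show a ≤ 5 by omega)]
        omega
      · have : 4 ≤ a := by
          by_contra! ha
          linarith [rho_mono (show a ≤ 3 by omega), rho_mono (show b ≤ 3 by omega)]
        omega
    · have : 3 ≤ a := by
        by_contra! ha
        linarith [rho_mono (show a ≤ 2 by omega), rho_mono (show b ≤ 2 by omega),
          rho_mono (show c ≤ 2 by omega)]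
      omega
  · have : 2 ≤ a := by
      by_contra! ha
      linarith [rho_mono (show a ≤ 1 by omega), rho_mono (show b ≤ 1 by omega),
        rho_mono (show c ≤ 1 by omega), rho_mono (show d ≤ 1 by omega)]
    omega

lemma exists_mem_kHat_ofList_le {v : ℕ → ℕ} (hv : IsVt v) (h : 4 < rhoV v) :
    ∃ k ∈ kHat, ∀ i, ofList k i ≤ v i := by
  have h10 : v 1 ≤ v 0 := hv.1 _ _ zero_le_one
  have h21 : v 2 ≤ v 1 := hv.1 _ _ one_le_two
  have h32 : v 3 ≤ v 2 := hv.1 _ _ (by norm_num)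
  have h43 : v 4 ≤ v 3 := hv.1 _ _ (by norm_num)
  simp only [kHat, List.mem_cons, List.not_mem_nil, or_false, exists_eq_or_imp,
    exists_eq_left, ofList_cons_le_iff, ofList_nil, zero_le, implies_true, and_true, zero_add,
    Nat.reduceAdd]
  by_cases he : 1 ≤ v 4
  · omega
  · rw [rhoV_eq_sum_range (s := 4) fun i hi => hv.eq_zero_of_le (by omega) hi] at h
    simp only [Finset.sum_range_succ, Finset.sum_range_zero, zero_add] at h
    have := le_of_four_lt_rho_add h10 h21 h32 h
    omega

/-- The set of minimal elements (for the coordinatewise partial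
order on `Ṽ`) of `{v ∈ Ṽ : ρ(v) > 4}` is exactly
`K̂ = {(1,1,1,1,1), (2,1,1,1), (3,2,2), (4,3,1), (6,2,1)}`. -/
theorem rho_gt_four_minimal_solutions (w : ℕ → ℕ) (hw : IsVt w) :
    (rhoV w > 4 ∧ ∀ v : ℕ → ℕ, IsVt v → rhoV v > 4 → (∀ i, v i ≤ w i) → v = w) ↔
      w = ofList [1, 1, 1, 1, 1] ∨ w = ofList [2, 1, 1, 1] ∨
      w = ofList [3, 2, 2] ∨ w = ofList [4, 3, 1] ∨ w = ofList [6, 2, 1] := by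
  rw [← exists_mem_kHat_eq_ofList_iff]
  constructor
  · rintro ⟨hgt, hmin⟩
    obtain ⟨k, hk, hle⟩ := exists_mem_kHat_ofList_le hw hgt
    exact ⟨k, hk, (hmin _ (isVt_of_mem_kHat hk) (four_lt_rhoV_of_mem_kHat hk) hle).symm⟩
  · rintro ⟨k, hk, rfl⟩
    exact ⟨four_lt_rhoV_of_mem_kHat hk,
      fun v _ hv hle => eq_ofList_of_le_of_four_lt_rhoV hk hle hv⟩
end
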